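/- arXiv:math/0110050 — 3 statements merged into one kernel-verified Lean document; each statement's English description precedes it below -/
import Mathlib

section
/- Let r be a positive integer and b an integer coprime to r. Suppose (s1, s2, s3) is a triple of nonnegative integers, not all zero, such that s1 - s2 + b·s3 ≡ 0 (mod r). Then there exist triples (t1, t2, t3) and (u1, u2, u3) of nonnegative integers with t_i + u_i = s_i for i = 1, 2, 3, such that t1 - t2 + b·t3 ≡ 1 (mod r) and u1 - u2 + b·u3 ≡ -1 (mod r). -/
/-!
If `x₁` or `x₂` divides the monomial, split it off: it has weight `1` or `-1`, and the cofactor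
then has the opposite weight because the total weight is `0`. Otherwise the monomial is `x₃^s₃`
with `r ∣ b s₃`, so `r ∣ s₃` and `s₃ ≥ r`; take `x₃^k` with `b k ≡ 1 (mod r)` and `k < r`.
-/

theorem IsCoprime.exists_lt_mul_modEq_one {b : ℤ} {r : ℕ} (hb : IsCoprime b r) (hr : 0 < r) :
    ∃ k : ℕ, k < r ∧ b * k ≡ 1 [ZMOD r] := by
  obtain ⟨a, v, hav⟩ := hb
  have hr' : (0 : ℤ) < r := by exact_mod_cast hr
  have ha : (0 : ℤ) ≤ a % r := Int.emod_nonneg a hr'.ne'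
  refine ⟨(a % r).toNat, by have := Int.emod_lt_of_pos a hr'; omega, ?_⟩
  rw [Int.toNat_of_nonneg ha]
  calc b * (a % r) ≡ b * a [ZMOD r] := (Int.mod_modEq a r).mul_left b
    _ ≡ 1 [ZMOD r] := Int.modEq_iff_dvd.mpr ⟨v, by linear_combination -hav⟩

theorem IsCoprime.exists_le_mul_modEq_one {b : ℤ} {r s : ℕ} (hb : IsCoprime b r) (hs : 0 < s)
    (hbs : (r : ℤ) ∣ b * s) : ∃ k ≤ s, b * k ≡ 1 [ZMOD r] := by
  have hrs : r ∣ s := Int.natCast_dvd_natCast.mp (hb.symm.dvd_of_dvd_mul_left hbs)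
  obtain ⟨k, hkr, hk⟩ := hb.exists_lt_mul_modEq_one (Nat.pos_of_dvd_of_pos hrs hs)
  exact ⟨k, hkr.le.trans (Nat.le_of_dvd hs hrs), hk⟩

theorem modEq_neg_of_add_eq {r b c : ℤ} {s1 s2 s3 t1 t2 t3 u1 u2 u3 : ℕ}
    (h1 : t1 + u1 = s1) (h2 : t2 + u2 = s2) (h3 : t3 + u3 = s3)
    (hs : (s1 : ℤ) - s2 + b * s3 ≡ 0 [ZMOD r]) (ht : (t1 : ℤ) - t2 + b * t3 ≡ c [ZMOD r]) :
    (u1 : ℤ) - u2 + b * u3 ≡ -c [ZMOD r] := by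
  subst h1 h2 h3
  have := hs.sub ht
  push_cast at this
  convert this using 1 <;> ring

theorem stmt0_general (r : ℕ) (b : ℤ) (hb : IsCoprime b (r : ℤ))
    (s1 s2 s3 : ℕ) (hs : ¬(s1 = 0 ∧ s2 = 0 ∧ s3 = 0))
    (hw : (s1 : ℤ) - s2 + b * s3 ≡ 0 [ZMOD (r : ℤ)]) :
    ∃ t1 t2 t3 u1 u2 u3 : ℕ,
      t1 + u1 = s1 ∧ t2 + u2 = s2 ∧ t3 + u3 = s3 ∧
      ((t1 : ℤ) - t2 + b * t3 ≡ 1 [ZMOD (r : ℤ)]) ∧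
      ((u1 : ℤ) - u2 + b * u3 ≡ -1 [ZMOD (r : ℤ)]) := by
  by_cases h1 : s1 ≠ 0
  · obtain ⟨s1, rfl⟩ := Nat.exists_eq_add_one_of_ne_zero h1
    have ht : ((1 : ℕ) : ℤ) - (0 : ℕ) + b * (0 : ℕ) ≡ 1 [ZMOD r] := by simp [Int.ModEq.refl]
    exact ⟨1, 0, 0, s1, s2, s3, add_comm _ _, zero_add _, zero_add _, ht,
      modEq_neg_of_add_eq (add_comm _ _) (zero_add _) (zero_add _) hw ht⟩
  by_cases h2 : s2 ≠ 0
  · obtain ⟨s2, rfl⟩ := Nat.exists_eq_add_one_of_ne_zero h2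
    have hu : ((0 : ℕ) : ℤ) - (1 : ℕ) + b * (0 : ℕ) ≡ -1 [ZMOD r] := by simp [Int.ModEq.refl]
    have ht := modEq_neg_of_add_eq (zero_add s1) (add_comm 1 s2) (zero_add s3) hw hu
    exact ⟨s1, s2, s3, 0, 1, 0, add_zero _, rfl, add_zero _, by rwa [neg_neg] at ht, hu⟩
  obtain ⟨rfl, rfl⟩ : s1 = 0 ∧ s2 = 0 := by omega
  have hbs : (r : ℤ) ∣ b * s3 := by simpa [Int.modEq_zero_iff_dvd] using hw
  obtain ⟨k, hks, hk⟩ := hb.exists_le_mul_modEq_one (by omega) hbs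
  have ht : ((0 : ℕ) : ℤ) - (0 : ℕ) + b * k ≡ 1 [ZMOD r] := by simpa using hk
  exact ⟨0, 0, k, 0, 0, s3 - k, rfl, rfl, Nat.add_sub_cancel' hks, ht,
    modEq_neg_of_add_eq rfl rfl (Nat.add_sub_cancel' hks) hw ht⟩

theorem stmt0 (r : ℕ) (hr : 0 < r) (b : ℤ) (hb : IsCoprime b (r : ℤ))
    (s1 s2 s3 : ℕ) (hs : ¬(s1 = 0 ∧ s2 = 0 ∧ s3 = 0))
    (hw : (s1 : ℤ) - s2 + b * s3 ≡ 0 [ZMOD (r : ℤ)]) :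
    ∃ t1 t2 t3 u1 u2 u3 : ℕ,
      t1 + u1 = s1 ∧ t2 + u2 = s2 ∧ t3 + u3 = s3 ∧
      ((t1 : ℤ) - t2 + b * t3 ≡ 1 [ZMOD (r : ℤ)]) ∧
      ((u1 : ℤ) - u2 + b * u3 ≡ -1 [ZMOD (r : ℤ)]) :=
  stmt0_general r b hb s1 s2 s3 hs hw
end

section
/- Let r ≥ 5 be an odd integer. The smallest nonnegative integer w such that the element (w, -4 mod r) of ℤ × ℤ/r lies in the additive semigroup generated by (1, 1), (r-1, -1), and (4, 4) is w = r - 4. -/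
/-!
Every generator `(a, n)` satisfies `a ≡ n (mod r)`, hence so does every element of the
semigroup. Thus `(w, -4)` can only lie in it when `r ∣ w + 4`, forcing `w ≥ r - 4`;
and `(r - 4, -4) = (r - 4) • (1, 1)` attains the bound.
-/

theorem Int.modEq_of_eq_of_generators_modEq (r k1 k2 k3 w : ℤ)
    (hw : w = k1 * 1 + k2 * (r - 1) + k3 * 4) :
    w ≡ k1 * 1 + k2 * (-1) + k3 * 4 [ZMOD r] :=
  Int.modEq_iff_dvd.mpr ⟨-k2, by rw [hw]; ring⟩

theorem Nat.le_add_of_intModEq_neg {r w c : ℕ} (hc : 0 < c) (h : (w : ℤ) ≡ -c [ZMOD r]) :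
    r ≤ w + c := by
  have hdvd : (r : ℤ) ∣ w + c := by
    simpa using (Int.modEq_iff_dvd.mp h.symm)
  exact Nat.le_of_dvd (by omega) (by exact_mod_cast hdvd)

theorem stmt13_general (r : ℕ) (hr : 5 ≤ r) :
    IsLeast {w : ℕ | ∃ k1 k2 k3 : ℕ,
      (w : ℤ) = k1 * 1 + k2 * ((r : ℤ) - 1) + k3 * 4 ∧
      (k1 : ℤ) * 1 + (k2 : ℤ) * (-1) + (k3 : ℤ) * 4 ≡ -4 [ZMOD (r : ℤ)]}
      (r - 4) := by
  refine ⟨⟨r - 4, 0, 0, by push_cast [show 4 ≤ r by omega]; ring, ?_⟩, ?_⟩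
  · exact Int.modEq_iff_dvd.mpr ⟨-1, by push_cast [show 4 ≤ r by omega]; ring⟩
  · rintro w ⟨k1, k2, k3, hw, hwt⟩
    have hmod : (w : ℤ) ≡ -(4 : ℕ) [ZMOD r] :=
      (Int.modEq_of_eq_of_generators_modEq r k1 k2 k3 w hw).trans hwt
    have := Nat.le_add_of_intModEq_neg (by norm_num) hmod
    omega

theorem stmt13 (r : ℕ) (hr : 5 ≤ r) (hodd : Odd r) :
    IsLeast {w : ℕ | ∃ k1 k2 k3 : ℕ,
      (w : ℤ) = k1 * 1 + k2 * ((r : ℤ) - 1) + k3 * 4 ∧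
      (k1 : ℤ) * 1 + (k2 : ℤ) * (-1) + (k3 : ℤ) * 4 ≡ -4 [ZMOD (r : ℤ)]}
      (r - 4) :=
  stmt13_general r hr
end

section
/- Let r ≥ 3 be an odd integer. The smallest nonnegative integer w such that (w, 1 mod r) lies in the additive subsemigroup of ℤ × ℤ/r generated by (r+1, 1), (r-1, -1), (2, 2), and (r, 0) is w = r + 1. Moreover, the smallest nonnegative integer w' such that (w', 2 mod r) lies in this semigroup is w' = 2. -/
/-!
The degree `k₁(r+1) + k₂(r-1) + 2k₃ + k₄r` of a semigroup element is congruent modulo `r` to its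
weight `k₁ - k₂ + 2k₃`. Hence an element of weight `c ∈ [0, r)` has degree either `c` or at least
`r + c`. Degree `1` is never attained, since every generator has degree at least `2`, so the least
degree of weight `1` is `r + 1`, while degree `2` of weight `2` is realized by the generator `(2, 2)`.
-/

theorem add_le_of_modEq_of_ne {m c w : ℕ} (hc : c < m) (h : w ≡ c [MOD m]) (hne : w ≠ c) :
    m + c ≤ w := by
  have hmod : w % m = c := Eq.trans h (Nat.mod_eq_of_lt hc)
  have hquot : 0 < w / m := by
    refine Nat.pos_of_ne_zero fun h0 => hne ?_
    rw [← Nat.div_add_mod w m, h0, mul_zero, zero_add, hmod]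
  calc m + c ≤ m * (w / m) + w % m := by
        rw [hmod]; gcongr; exact Nat.le_mul_of_pos_right m hquot
    _ = w := Nat.div_add_mod w m

theorem degree_modEq_weight (r k₁ k₂ k₃ k₄ : ℤ) :
    k₁ * (r + 1) + k₂ * (r - 1) + k₃ * 2 + k₄ * r ≡ k₁ - k₂ + 2 * k₃ [ZMOD r] :=
  Int.modEq_iff_dvd.mpr ⟨-(k₁ + k₂ + k₄), by ring⟩

theorem natCast_modEq_of_degree_eq {r w c k₁ k₂ k₃ k₄ : ℕ}
    (hw : (w : ℤ) = k₁ * ((r : ℤ) + 1) + k₂ * ((r : ℤ) - 1) + k₃ * 2 + k₄ * r)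
    (hc : (k₁ : ℤ) - k₂ + 2 * k₃ ≡ c [ZMOD r]) : w ≡ c [MOD r] :=
  Int.natCast_modEq_iff.mp (hw ▸ (degree_modEq_weight _ _ _ _ _).trans hc)

theorem eq_zero_of_natCast_mul_le_one {k : ℕ} {a : ℤ} (ha : 2 ≤ a) (h : (k : ℤ) * a ≤ 1) :
    k = 0 := by
  by_contra hk
  have : (1 : ℤ) ≤ k := by exact_mod_cast Nat.one_le_iff_ne_zero.mpr hk
  nlinarith

theorem degree_ne_one {r : ℤ} (hr : 3 ≤ r) (k₁ k₂ k₃ k₄ : ℕ) :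
    (k₁ : ℤ) * (r + 1) + k₂ * (r - 1) + k₃ * 2 + k₄ * r ≠ 1 := by
  intro h
  have h₁ : 0 ≤ (k₁ : ℤ) * (r + 1) := by positivity
  have h₂ : 0 ≤ (k₂ : ℤ) * (r - 1) := mul_nonneg k₂.cast_nonneg (by linarith)
  have h₃ : 0 ≤ (k₃ : ℤ) * 2 := by positivity
  have h₄ : 0 ≤ (k₄ : ℤ) * r := by positivity
  obtain rfl : k₁ = 0 := eq_zero_of_natCast_mul_le_one (a := r + 1) (by linarith) (by linarith)
  obtain rfl : k₂ = 0 := eq_zero_of_natCast_mul_le_one (a := r - 1) (by linarith) (by linarith)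
  obtain rfl : k₃ = 0 := eq_zero_of_natCast_mul_le_one le_rfl (by linarith)
  obtain rfl : k₄ = 0 := eq_zero_of_natCast_mul_le_one (a := r) (by linarith) (by linarith)
  simp at h

theorem stmt15_general (r : ℕ) (hr : 3 ≤ r) :
    IsLeast {w : ℕ | ∃ k1 k2 k3 k4 : ℕ,
      (w : ℤ) = k1 * ((r : ℤ) + 1) + k2 * ((r : ℤ) - 1) + k3 * 2 + k4 * r ∧
      (k1 : ℤ) - k2 + 2 * k3 ≡ 1 [ZMOD (r : ℤ)]} (r + 1) ∧
    IsLeast {w : ℕ | ∃ k1 k2 k3 k4 : ℕ,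
      (w : ℤ) = k1 * ((r : ℤ) + 1) + k2 * ((r : ℤ) - 1) + k3 * 2 + k4 * r ∧
      (k1 : ℤ) - k2 + 2 * k3 ≡ 2 [ZMOD (r : ℤ)]} 2 := by
  refine ⟨⟨⟨1, 0, 0, 0, by push_cast; ring, by simp⟩, ?_⟩,
    ⟨⟨0, 0, 1, 0, by push_cast; ring, by simp⟩, ?_⟩⟩
  · rintro w ⟨k₁, k₂, k₃, k₄, hw, hc⟩
    refine add_le_of_modEq_of_ne (show 1 < r by omega) (natCast_modEq_of_degree_eq hw hc) ?_
    rintro rfl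
    exact degree_ne_one (r := r) (by exact_mod_cast hr) k₁ k₂ k₃ k₄ (by rw [← hw, Nat.cast_one])
  · rintro w ⟨k₁, k₂, k₃, k₄, hw, hc⟩
    by_cases h : w = 2
    · exact h.ge
    · have := add_le_of_modEq_of_ne (show 2 < r by omega) (natCast_modEq_of_degree_eq hw hc) h
      omega

theorem stmt15 (r : ℕ) (hr : 3 ≤ r) (hodd : Odd r) :
    IsLeast {w : ℕ | ∃ k1 k2 k3 k4 : ℕ,
      (w : ℤ) = k1 * ((r : ℤ) + 1) + k2 * ((r : ℤ) - 1) + k3 * 2 + k4 * r ∧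
      (k1 : ℤ) - k2 + 2 * k3 ≡ 1 [ZMOD (r : ℤ)]} (r + 1) ∧
    IsLeast {w : ℕ | ∃ k1 k2 k3 k4 : ℕ,
      (w : ℤ) = k1 * ((r : ℤ) + 1) + k2 * ((r : ℤ) - 1) + k3 * 2 + k4 * r ∧
      (k1 : ℤ) - k2 + 2 * k3 ≡ 2 [ZMOD (r : ℤ)]} 2 :=
  stmt15_general r hr
end
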